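/- Let Y₁ and Y₂ be real-valued random variables with Y₁ > 0 and Y₂ > 0 almost surely, let b > 0, set R = Y₂ / Y₁^b and Z = (log Y₁, log Y₂), and let p ∈ (0,1). Then the directional quantile envelope D(p) of Z is contained in the closed half-plane {(z₁,z₂) ∈ ℝ² : z₂ ≥ b·z₁ + log Q_R(p)}; that is, the line z₂ = log Q_R(p) + b·z₁ (the first tangent line of Proposition 1) bounds D(p) from below. -/

import Mathlib

open MeasureTheory Real
open scoped ENNReal RealInnerProductSpace

/-- The quantile function `Q_X(p) = inf {x : P(X ≤ x) ≥ p}`. -/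
noncomputable def quantileFn {Ω : Type*} [MeasurableSpace Ω] (μ : Measure Ω)
    (X : Ω → ℝ) (p : ℝ) : ℝ :=
  sInf {x : ℝ | ENNReal.ofReal p ≤ μ {ω | X ω ≤ x}}

/-- The `p`-th directional quantile envelope of a random vector `W` with values in `ℝ^K`:
the intersection over unit directions `d` of the half-spaces
`{w : ⟨d, w⟩ ≥ Q_{⟨d,W⟩}(p)}`. -/
noncomputable def dqe {Ω : Type*} [MeasurableSpace Ω] (μ : Measure Ω) {K : ℕ}
    (W : Ω → EuclideanSpace ℝ (Fin K)) (p : ℝ) : Set (EuclideanSpace ℝ (Fin K)) :=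
  ⋂ (d : EuclideanSpace ℝ (Fin K)) (_ : ‖d‖ = 1),
    {w : EuclideanSpace ℝ (Fin K) | quantileFn μ (fun ω => (inner ℝ d (W ω) : ℝ)) p ≤ (inner ℝ d w : ℝ)}

/-! In the unit direction `d` proportional to `(-b, 1)` one has `⟨d, Z⟩ = log R / ‖(-b, 1)‖`
almost surely. Quantiles commute with multiplication by a positive constant and, for a.s.
positive variables, with `log`, so the half-space that `D(p)` imposes in direction `d` is
exactly `{z | z₂ - b z₁ ≥ log Q_R(p)}`. -/

open scoped Pointwise

lemma Real.sInf_exp_preimage {S : Set ℝ} (hS : IsUpperSet S) (hpos : S ⊆ Set.Ioi 0) :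
    sInf (exp ⁻¹' S) = log (sInf S) := by
  -- when `S = ∅` or `sInf S = 0`, both sides are `0` by the junk values of `sInf` and `log`
  rcases S.eq_empty_or_nonempty with rfl | hne
  · simp
  have hgt : ∀ y, sInf S < y → y ∈ S := fun y hy =>
    let ⟨_, hy', hlt⟩ := exists_lt_of_csInf_lt hne hy
    hS hlt.le hy'
  rcases (le_csInf hne fun y hy => (hpos hy).le).eq_or_lt with hq | hq
  · have huniv : exp ⁻¹' S = Set.univ :=
      Set.eq_univ_of_forall fun x => hgt (exp x) (hq ▸ exp_pos x)
    rw [← hq, log_zero, huniv, Real.sInf_univ]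
  · have hgt_log : ∀ x, log (sInf S) < x → x ∈ exp ⁻¹' S := fun x hx =>
      hgt _ ((log_lt_iff_lt_exp hq).1 hx)
    refine csInf_eq_of_forall_ge_of_forall_gt_exists_lt ⟨_, hgt_log _ (lt_add_one _)⟩
      (fun x hx => (log_le_iff_le_exp hq).2 (csInf_le ⟨0, fun y hy => (hpos hy).le⟩ hx))
      fun w hw => ⟨(log (sInf S) + w) / 2, hgt_log _ (by linarith), by linarith⟩

section Quantile

variable {Ω : Type*} [MeasurableSpace Ω] {μ : Measure Ω}

lemma quantileFn_congr_ae {X X' : Ω → ℝ} (h : X =ᵐ[μ] X') (p : ℝ) :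
    quantileFn μ X p = quantileFn μ X' p := by
  have hcdf : ∀ x, μ {ω | X ω ≤ x} = μ {ω | X' ω ≤ x} := fun x =>
    measure_congr <| by
      filter_upwards [h] with ω hω
      change (X ω ≤ x) = (X' ω ≤ x)
      rw [hω]
  simp only [quantileFn, hcdf]

lemma quantileFn_const_mul (X : Ω → ℝ) {c : ℝ} (hc : 0 < c) (p : ℝ) :
    quantileFn μ (fun ω => c * X ω) p = c * quantileFn μ X p := by
  have hset : {x | ENNReal.ofReal p ≤ μ {ω | c * X ω ≤ x}}
      = c • {y | ENNReal.ofReal p ≤ μ {ω | X ω ≤ y}} := by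
    ext x
    simp only [Set.mem_smul_set_iff_inv_smul_mem₀ hc.ne', Set.mem_ofPred_eq, smul_eq_mul,
      ← div_eq_inv_mul, le_div_iff₀' hc]
  rw [quantileFn, hset, Real.sInf_smul_of_nonneg hc.le, smul_eq_mul, quantileFn]

lemma quantileFn_log {R : Ω → ℝ} (hR : ∀ᵐ ω ∂μ, 0 < R ω) {p : ℝ} (hp : 0 < p) :
    quantileFn μ (fun ω => log (R ω)) p = log (quantileFn μ R p) := by
  have hcdf : ∀ x, μ {ω | log (R ω) ≤ x} = μ {ω | R ω ≤ exp x} := fun x =>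
    measure_congr <| by
      filter_upwards [hR] with ω hω
      exact propext (log_le_iff_le_exp hω)
  simp only [quantileFn, hcdf]
  refine Real.sInf_exp_preimage (S := {y | ENNReal.ofReal p ≤ μ {ω | R ω ≤ y}})
    (fun x y hxy hx => hx.trans (measure_mono fun ω hω => le_trans hω hxy))
    fun y (hy : ENNReal.ofReal p ≤ μ {ω | R ω ≤ y}) => Set.mem_Ioi.2 <| lt_of_not_ge fun hy0 => ?_
  have hnull : μ {ω | R ω ≤ y} = 0 :=
    measure_mono_null (fun ω hω => not_lt.2 (le_trans hω hy0)) (ae_iff.1 hR)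
  rw [hnull, nonpos_iff_eq_zero, ENNReal.ofReal_eq_zero] at hy
  linarith

end Quantile

theorem stmt0_general {Ω : Type*} [MeasurableSpace Ω] (μ : Measure Ω)
    (Y₁ Y₂ : Ω → ℝ) (hY₁ : ∀ᵐ ω ∂μ, 0 < Y₁ ω) (hY₂ : ∀ᵐ ω ∂μ, 0 < Y₂ ω)
    (b : ℝ) (p : ℝ) (hp : p ∈ Set.Ioo (0 : ℝ) 1)
    (R : Ω → ℝ) (hR : R = fun ω => Y₂ ω / (Y₁ ω) ^ b)
    (Z : Ω → EuclideanSpace ℝ (Fin 2))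
    (hZ : Z = fun ω => WithLp.toLp 2 ![Real.log (Y₁ ω), Real.log (Y₂ ω)]) :
    dqe μ Z p ⊆
      {z : EuclideanSpace ℝ (Fin 2) | b * z 0 + Real.log (quantileFn μ R p) ≤ z 1} := by
  intro z hz
  set v : EuclideanSpace ℝ (Fin 2) := !₂[-b, 1]
  have hv : v ≠ 0 := fun h => one_ne_zero (congrArg (· 1) h)
  have inner_v (w : EuclideanSpace ℝ (Fin 2)) : ⟪v, w⟫ = w 1 - b * w 0 := by
    simp only [v, PiLp.inner_apply, RCLike.inner_apply, ringHom_apply, Fin.sum_univ_two,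
      Matrix.cons_val_zero, Matrix.cons_val_one, Matrix.cons_val_fin_one]
    ring
  have hRpos : ∀ᵐ ω ∂μ, 0 < R ω := by
    filter_upwards [hY₁, hY₂] with ω h₁ h₂
    exact hR ▸ div_pos h₂ (rpow_pos_of_pos h₁ b)
  have hproj : (fun ω => ⟪‖v‖⁻¹ • v, Z ω⟫) =ᵐ[μ] fun ω => ‖v‖⁻¹ * log (R ω) := by
    filter_upwards [hY₁, hY₂] with ω h₁ h₂
    rw [real_inner_smul_left, inner_v, hR, hZ, log_div h₂.ne' (rpow_pos_of_pos h₁ b).ne',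
      log_rpow h₁]
    simp
  have hz' := Set.mem_iInter₂.1 hz (‖v‖⁻¹ • v) (norm_smul_inv_norm hv)
  rw [Set.mem_ofPred_eq, quantileFn_congr_ae hproj, quantileFn_const_mul _ (by positivity),
    quantileFn_log hRpos hp.1, real_inner_smul_left, inner_v] at hz'
  have := le_of_mul_le_mul_left hz' (by positivity)
  show b * z 0 + log (quantileFn μ R p) ≤ z 1
  linarith

theorem stmt0 {Ω : Type*} [MeasurableSpace Ω] (μ : Measure Ω) [IsProbabilityMeasure μ]
    (Y₁ Y₂ : Ω → ℝ) (hY₁ : ∀ᵐ ω ∂μ, 0 < Y₁ ω) (hY₂ : ∀ᵐ ω ∂μ, 0 < Y₂ ω)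
    (b : ℝ) (hb : 0 < b) (p : ℝ) (hp : p ∈ Set.Ioo (0 : ℝ) 1)
    (R : Ω → ℝ) (hR : R = fun ω => Y₂ ω / (Y₁ ω) ^ b)
    (Z : Ω → EuclideanSpace ℝ (Fin 2))
    (hZ : Z = fun ω => WithLp.toLp 2 ![Real.log (Y₁ ω), Real.log (Y₂ ω)]) :
    dqe μ Z p ⊆
      {z : EuclideanSpace ℝ (Fin 2) | b * z 0 + Real.log (quantileFn μ R p) ≤ z 1} :=
  stmt0_general μ Y₁ Y₂ hY₁ hY₂ b p hp R hR Z hZ
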